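/- Define for symmetric positive-definite matrices g₀, g₁: a = det(g₀)^{1/4}, b = det(g₁)^{1/4}, k = log(g₀⁻¹g₁), k₀ = k − (Tr k/n)Id, κ = √(n·Tr(k₀²))/4, θ = min(π, κ). Then the pointwise squared Ebin distance d(g₀,g₁)² = (16/n)(a² − 2ab·cos θ + b²) is nonnegative, and it is zero if and only if g₀ = g₁. -/

import Mathlib

/-!
Conjugating by `V`, the logarithm `k` and its trace-free part `k₀` become diagonal with entries
`xᵢ = log dᵢ` and `xᵢ - x̄`, so `Tr (k₀²) = ∑ (xᵢ - x̄)²` and `Tr k = log det g₁ - log det g₀`.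
By the law of cosines `a² - 2ab cos θ + b² ≥ 0`, with equality for `a, b > 0` exactly when
`a = b` and `θ = 0`, i.e. when `∑ xᵢ = 0` and every `xᵢ = x̄`. That says all `dᵢ = 1`, which is
`g₀⁻¹ g₁ = 1`.
-/

open Matrix

namespace Matrix

variable {m α : Type*} [Fintype m] [DecidableEq m] [CommRing α] {V : Matrix m m α}

theorem conj_mul_conj (hV : IsUnit V) (A B : Matrix m m α) :
    V * A * V⁻¹ * (V * B * V⁻¹) = V * (A * B) * V⁻¹ := by
  rw [← hV.unit_spec, ← coe_units_inv]
  simp only [Matrix.mul_assoc, Units.inv_mul_cancel_left]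

theorem conj_eq_one_iff (hV : IsUnit V) {A : Matrix m m α} : V * A * V⁻¹ = 1 ↔ A = 1 := by
  rw [← hV.unit_spec, ← coe_units_inv, Units.mul_inv_eq_one]
  conv_rhs => rw [← Units.mul_right_inj hV.unit, Matrix.mul_one]

theorem conj_diagonal_sub_smul_one (hV : IsUnit V) (x : m → α) (c : α) :
    V * diagonal x * V⁻¹ - c • 1 = V * diagonal (fun i => x i - c) * V⁻¹ := by
  rw [← diagonal_sub, Matrix.mul_sub, Matrix.sub_mul, ← smul_one_eq_diagonal, Matrix.mul_smul,
    Matrix.smul_mul, Matrix.mul_one, mul_nonsing_inv V ((isUnit_iff_isUnit_det V).1 hV)]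

theorem trace_sq_conj_diagonal_sub_smul_one (hV : IsUnit V) (x : m → α) (c : α) :
    trace ((V * diagonal x * V⁻¹ - c • 1) * (V * diagonal x * V⁻¹ - c • 1)) =
      ∑ i, (x i - c) * (x i - c) := by
  rw [conj_diagonal_sub_smul_one hV, conj_mul_conj hV, trace_conj hV, diagonal_mul_diagonal,
    trace_diagonal]

theorem eq_iff_forall_eq_one_of_inv_mul_eq_conj_diagonal {A B : Matrix m m α} {d : m → α}
    (hA : IsUnit A) (hV : IsUnit V) (h : A⁻¹ * B = V * diagonal d * V⁻¹) :
    A = B ↔ ∀ i, d i = 1 := by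
  calc A = B ↔ A⁻¹ * B = 1 := by rw [← hA.unit_spec, ← coe_units_inv, Units.inv_mul_eq_one]
    _ ↔ ∀ i, d i = 1 := by rw [h, conj_eq_one_iff hV, diagonal_eq_one, funext_iff]; rfl

theorem sum_log_eq_log_det_sub_log_det {A B V : Matrix m m ℝ} {d : m → ℝ} (hA : A.det ≠ 0)
    (hB : B.det ≠ 0) (hV : IsUnit V) (hd : ∀ i, d i ≠ 0) (h : A⁻¹ * B = V * diagonal d * V⁻¹) :
    ∑ i, Real.log (d i) = Real.log B.det - Real.log A.det := by
  rw [← Real.log_prod fun i _ => hd i, ← det_diagonal, ← det_conj hV, ← h, det_mul,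
    det_nonsing_inv, Ring.inverse_eq_inv', Real.log_mul (inv_ne_zero hA) hB, Real.log_inv,
    neg_add_eq_sub]

end Matrix

namespace Real

/-- Law of cosines: `a² - 2ab cos θ + b² = (a - b cos θ)² + (b sin θ)²`. -/
theorem sq_sub_two_mul_mul_cos_add_sq_nonneg (a b θ : ℝ) :
    0 ≤ a ^ 2 - 2 * a * b * cos θ + b ^ 2 := by
  nlinarith [sq_nonneg (a - b * cos θ), sq_nonneg (b * sin θ), sin_sq_add_cos_sq θ]

theorem sq_sub_two_mul_mul_cos_add_sq_eq_zero_iff {a b : ℝ} (ha : 0 < a) (hb : 0 < b) (θ : ℝ) :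
    a ^ 2 - 2 * a * b * cos θ + b ^ 2 = 0 ↔ a = b ∧ cos θ = 1 := by
  refine ⟨fun h => ?_, fun ⟨rfl, hcos⟩ => by rw [hcos]; ring⟩
  have hcos : cos θ = 1 := by
    nlinarith [sq_nonneg (a - b), mul_pos ha hb, cos_le_one θ]
  rw [hcos] at h
  exact ⟨by nlinarith [sq_nonneg (a - b)], hcos⟩

theorem cos_min_pi_eq_one_iff {x : ℝ} (hx : 0 ≤ x) : cos (min π x) = 1 ↔ x = 0 := by
  have h₀ : 0 ≤ min π x := le_min pi_pos.le hx
  have h₁ : min π x < 2 * π := (min_le_left _ _).trans_lt (by linarith [pi_pos])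
  rw [cos_eq_one_iff_of_lt_of_lt (by linarith) h₁, min_eq_iff]
  constructor
  · rintro (⟨hπ, -⟩ | ⟨hx0, -⟩)
    · exact absurd hπ pi_ne_zero
    · exact hx0
  · rintro rfl
    exact Or.inr ⟨rfl, pi_pos.le⟩

end Real

theorem Fintype.sum_eq_zero_and_forall_eq_sum_div_iff {ι K : Type*} [Fintype ι] [DivisionRing K]
    (x : ι → K) (c : K) : (∑ i, x i = 0 ∧ ∀ i, x i = (∑ j, x j) / c) ↔ ∀ i, x i = 0 := by
  refine ⟨fun ⟨hs, hmean⟩ i => by rw [hmean i, hs, zero_div], fun h => ?_⟩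
  have hs : ∑ i, x i = 0 := Finset.sum_eq_zero fun i _ => h i
  exact ⟨hs, fun i => by rw [h i, hs, zero_div]⟩

theorem ebin_pointwise_distance_nonneg_eq_zero_iff {n : ℕ} (hn : 2 ≤ n)
    (g₀ g₁ : Matrix (Fin n) (Fin n) ℝ) (h₀ : g₀.PosDef) (h₁ : g₁.PosDef)
    (V : Matrix (Fin n) (Fin n) ℝ) (d : Fin n → ℝ)
    (hV : IsUnit V.det) (hd : ∀ i, 0 < d i)
    (hdiag : g₀⁻¹ * g₁ = V * Matrix.diagonal d * V⁻¹) :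
    let k : Matrix (Fin n) (Fin n) ℝ :=
      V * Matrix.diagonal (fun i => Real.log (d i)) * V⁻¹
    let k₀ : Matrix (Fin n) (Fin n) ℝ := k - (Matrix.trace k / n) • 1
    let κ : ℝ := Real.sqrt (n * Matrix.trace (k₀ * k₀)) / 4
    let θ : ℝ := min Real.pi κ
    let a : ℝ := g₀.det ^ ((1 : ℝ) / 4)
    let b : ℝ := g₁.det ^ ((1 : ℝ) / 4)
    let dsq : ℝ := (16 / n) * (a ^ 2 - 2 * a * b * Real.cos θ + b ^ 2)
    0 ≤ dsq ∧ (dsq = 0 ↔ g₀ = g₁) := by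
  intro k k₀ κ θ a b dsq
  have hV' : IsUnit V := (isUnit_iff_isUnit_det V).2 hV
  have hn₀ : (0 : ℝ) < n := Nat.cast_pos.2 (by omega)
  have hκ : κ = 0 ↔ ∀ i, Real.log (d i) = (∑ j, Real.log (d j)) / n := by
    simp only [κ, k₀, k, trace_conj hV', trace_diagonal]
    rw [trace_sq_conj_diagonal_sub_smul_one hV', div_eq_zero_iff, or_iff_left four_ne_zero,
      Real.sqrt_eq_zero (mul_nonneg hn₀.le (Finset.sum_nonneg fun i _ => mul_self_nonneg _)),
      mul_eq_zero, or_iff_right hn₀.ne', Finset.sum_mul_self_eq_zero_iff]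
    simp only [Finset.mem_univ, true_implies, sub_eq_zero]
  have hsum : ∑ i, Real.log (d i) = Real.log g₁.det - Real.log g₀.det :=
    sum_log_eq_log_det_sub_log_det h₀.det_pos.ne' h₁.det_pos.ne' hV' (fun i => (hd i).ne') hdiag
  have hab : a = b ↔ ∑ i, Real.log (d i) = 0 := by
    rw [hsum, sub_eq_zero, Real.log_injOn_pos.eq_iff h₁.det_pos h₀.det_pos, eq_comm (a := g₁.det)]
    exact Real.rpow_left_inj h₀.det_pos.le h₁.det_pos.le (by norm_num)
  have hg : g₀ = g₁ ↔ ∀ i, Real.log (d i) = 0 := by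
    rw [eq_iff_forall_eq_one_of_inv_mul_eq_conj_diagonal h₀.isUnit hV' hdiag]
    exact forall_congr' fun i =>
      ⟨fun h => by rw [h, Real.log_one], Real.eq_one_of_pos_of_log_eq_zero (hd i)⟩
  have ha : 0 < a := Real.rpow_pos_of_pos h₀.det_pos _
  have hb : 0 < b := Real.rpow_pos_of_pos h₁.det_pos _
  have hκ₀ : 0 ≤ κ := by positivity
  refine ⟨mul_nonneg (by positivity) (Real.sq_sub_two_mul_mul_cos_add_sq_nonneg a b θ), ?_⟩
  calc dsq = 0 ↔ a ^ 2 - 2 * a * b * Real.cos θ + b ^ 2 = 0 :=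
        mul_eq_zero.trans (or_iff_right (by positivity))
    _ ↔ ∑ i, Real.log (d i) = 0 ∧ ∀ i, Real.log (d i) = (∑ j, Real.log (d j)) / n := by
        rw [Real.sq_sub_two_mul_mul_cos_add_sq_eq_zero_iff ha hb, Real.cos_min_pi_eq_one_iff hκ₀,
          hab, hκ]
    _ ↔ ∀ i, Real.log (d i) = 0 := Fintype.sum_eq_zero_and_forall_eq_sum_div_iff _ _
    _ ↔ g₀ = g₁ := hg.symm
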